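/- arXiv:1904.05551 — 3 statements merged into one kernel-verified Lean document; each statement's English description precedes it below -/
import Mathlib

section
/- A numerical semigroup S is irreducible if and only if its genus equals ⌈(F(S)+1)/2⌉. -/
/-- A numerical semigroup: a cofinite submonoid of (ℕ, +). -/
def IsNumericalSemigroup (S : Set ℕ) : Prop :=
  0 ∈ S ∧ (∀ a ∈ S, ∀ b ∈ S, a + b ∈ S) ∧ Sᶜ.Finite

/-- `m` is the multiplicity of `S`: its least positive element. -/
def HasMultiplicity (S : Set ℕ) (m : ℕ) : Prop :=
  m ∈ S ∧ 0 < m ∧ ∀ s ∈ S, 0 < s → m ≤ s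

/-- `F` is the Frobenius number of `S`: the largest non-element. -/
def HasFrobenius (S : Set ℕ) (F : ℕ) : Prop :=
  F ∉ S ∧ ∀ x : ℕ, F < x → x ∈ S

/-- `S` is an irreducible numerical semigroup: it is not the intersection of
two numerical semigroups properly containing it. -/
def IsIrreducibleNS (S : Set ℕ) : Prop :=
  IsNumericalSemigroup S ∧
    ¬ ∃ S₁ S₂ : Set ℕ, IsNumericalSemigroup S₁ ∧ IsNumericalSemigroup S₂ ∧
      S ⊂ S₁ ∧ S ⊂ S₂ ∧ S = S₁ ∩ S₂


/-!
Pair every `x ≤ F` with `F - x`. Since `F ∉ S`, no pair lies inside `S`; counting the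
`F + 1` numbers `x ≤ F` gives `2 g = F + 1 + u`, where `u` counts the `x ≤ F` for which
both `x` and `F - x` are gaps. The set of these `x` is stable under `x ↦ F - x`, whose only
possible fixed point is `F / 2`; hence `u ≤ 1`, i.e. `g = ⌈(F + 1) / 2⌉`, exactly when every
gap `x` has `F - x ∈ S` or `2 x = F`.

The latter condition is equivalent to irreducibility. If it holds, any numerical semigroup
`T ⊋ S` contains some gap `x` and then `F = x + (F - x)` or `F = x + x` lies in `T`; so `F`
belongs to every proper oversemigroup, and `S` is no intersection of two of them. If it
fails, let `h` be the largest gap with `F - h ∉ S` and `2 h ≠ F`. Then `2 h > F`, as `F - h`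
is another such gap, and by maximality `s + h ∈ S` for every positive `s ∈ S`; so
`S = (S ∪ {h}) ∩ (S ∪ {F})` with both semigroups numerical.
-/

open Finset

-- Only gaps `x ≤ F` ever occur here, so the truncated subtraction `F - x` is harmless.
def IsSymOrPseudoSym (S : Set ℕ) (F : ℕ) : Prop :=
  ∀ x ∉ S, F - x ∈ S ∨ 2 * x = F

theorem IsNumericalSemigroup.insert_of_add_mem {S : Set ℕ} (hS : IsNumericalSemigroup S)
    {x : ℕ} (hx : ∀ s ∈ S, 0 < s → s + x ∈ S) (hxx : x + x ∈ S) :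
    IsNumericalSemigroup (insert x S) := by
  obtain ⟨h0, hadd, hfin⟩ := hS
  refine ⟨Set.mem_insert_of_mem x h0, ?_,
    hfin.subset (Set.compl_subset_compl.2 (Set.subset_insert x S))⟩
  have hx' : ∀ s ∈ S, s + x ∈ insert x S := fun s hs => by
    rcases Nat.eq_zero_or_pos s with rfl | hpos
    · simp
    · exact Set.mem_insert_of_mem x (hx s hs hpos)
  rintro a (rfl | ha) b (rfl | hb)
  · exact Set.mem_insert_of_mem _ hxx
  · rw [add_comm]; exact hx' b hb
  · exact hx' a ha
  · exact Set.mem_insert_of_mem x (hadd a ha b hb)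

namespace HasFrobenius

variable {S : Set ℕ} {F : ℕ}

theorem le_of_notMem (hF : HasFrobenius S F) {x : ℕ} (hx : x ∉ S) : x ≤ F :=
  not_lt.1 fun h => hx (hF.2 x h)

theorem pos (hS : IsNumericalSemigroup S) (hF : HasFrobenius S F) : 0 < F :=
  Nat.pos_of_ne_zero fun h => hF.1 (h ▸ hS.1)

theorem sub_notMem (hS : IsNumericalSemigroup S) (hF : HasFrobenius S F) {x : ℕ}
    (hx : x ∈ S) (hxF : x ≤ F) : F - x ∉ S := fun h =>
  hF.1 (Nat.add_sub_cancel' hxF ▸ hS.2.1 x hx (F - x) h)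

open scoped Classical in
theorem compl_eq_filter_range (hF : HasFrobenius S F) :
    Sᶜ = ↑({x ∈ range (F + 1) | x ∉ S}) := by
  ext x
  simp only [Set.mem_compl_iff, coe_filter, mem_range, Set.mem_ofPred_eq]
  exact ⟨fun hx => ⟨Nat.lt_succ_of_le (hF.le_of_notMem hx), hx⟩, And.right⟩

theorem mem_of_ssubset (hF : HasFrobenius S F) (hA : IsSymOrPseudoSym S F) {T : Set ℕ}
    (hT : IsNumericalSemigroup T) (hST : S ⊂ T) : F ∈ T := by
  obtain ⟨x, hxT, hxS⟩ := Set.exists_of_ssubset hST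
  have hxF := hF.le_of_notMem hxS
  rcases hA x hxS with hFx | h2x
  · simpa [Nat.add_sub_cancel' hxF] using hT.2.1 x hxT (F - x) (hST.1 hFx)
  · simpa [← h2x, two_mul] using hT.2.1 x hxT x hxT

end HasFrobenius

section Irreducible

variable {S : Set ℕ} {F : ℕ}

theorem isIrreducibleNS_of_isSymOrPseudoSym (hS : IsNumericalSemigroup S)
    (hF : HasFrobenius S F) (hA : IsSymOrPseudoSym S F) : IsIrreducibleNS S := by
  refine ⟨hS, ?_⟩
  rintro ⟨S₁, S₂, hS₁, hS₂, hsub₁, hsub₂, rfl⟩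
  exact hF.1 ⟨hF.mem_of_ssubset hA hS₁ hsub₁, hF.mem_of_ssubset hA hS₂ hsub₂⟩

theorem exists_insert_of_not_isSymOrPseudoSym (hS : IsNumericalSemigroup S)
    (hF : HasFrobenius S F) (hA : ¬ IsSymOrPseudoSym S F) :
    ∃ h ∉ S, h ≠ F ∧ IsNumericalSemigroup (insert h S) := by
  let bad : Set ℕ := {x | x ∉ S ∧ F - x ∉ S ∧ 2 * x ≠ F}
  have hbad : bad.Nonempty := by
    simp only [IsSymOrPseudoSym, not_forall, not_or] at hA
    obtain ⟨x, hxS, hFx, h2x⟩ := hA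
    exact ⟨x, hxS, hFx, h2x⟩
  obtain ⟨h, ⟨hhS, hFh, h2h⟩, hmax⟩ :=
    bad.exists_max_image id (hS.2.2.subset fun x hx => hx.1) hbad
  have hhF := hF.le_of_notMem hhS
  have hFh_bad : F - h ∈ bad :=
    ⟨hFh, by rwa [Nat.sub_sub_self hhF], by omega⟩
  have hhalf : F < 2 * h := by have : F - h ≤ h := hmax _ hFh_bad; omega
  refine ⟨h, hhS, fun he => hFh (by simpa [he] using hS.1),
    hS.insert_of_add_mem ?_ (hF.2 _ (by omega))⟩
  intro s hs hspos
  by_contra hsh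
  have hshF := hF.le_of_notMem hsh
  have hFsh : F - (s + h) ∉ S := fun hmem => hFh (by
    simpa [show s + (F - (s + h)) = F - h by omega] using hS.2.1 s hs _ hmem)
  have : s + h ≤ h := hmax (s + h) ⟨hsh, hFsh, by omega⟩
  omega

theorem isSymOrPseudoSym_of_isIrreducibleNS (hS : IsNumericalSemigroup S)
    (hF : HasFrobenius S F) (hirr : IsIrreducibleNS S) : IsSymOrPseudoSym S F := by
  by_contra hA
  obtain ⟨h, hhS, hhF, hSh⟩ := exists_insert_of_not_isSymOrPseudoSym hS hF hA
  have hSF : IsNumericalSemigroup (insert F S) :=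
    hS.insert_of_add_mem (fun s _ hs => hF.2 _ (by omega))
      (hF.2 _ (by have := hF.pos hS; omega))
  refine hirr.2 ⟨insert h S, insert F S, hSh, hSF, Set.ssubset_insert hhS,
    Set.ssubset_insert hF.1, ?_⟩
  rw [Set.insert_inter_of_notMem (by simpa [hhF] using hhS),
    Set.inter_eq_left.2 (Set.subset_insert F S)]

theorem isIrreducibleNS_iff (hS : IsNumericalSemigroup S) (hF : HasFrobenius S F) :
    IsIrreducibleNS S ↔ IsSymOrPseudoSym S F :=
  ⟨isSymOrPseudoSym_of_isIrreducibleNS hS hF, isIrreducibleNS_of_isSymOrPseudoSym hS hF⟩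

end Irreducible

section Genus

open scoped Classical

variable {S : Set ℕ} {F : ℕ}

noncomputable def unpairedGaps (S : Set ℕ) (F : ℕ) : Finset ℕ :=
  {x ∈ range (F + 1) | x ∉ S ∧ F - x ∉ S}

theorem card_filter_range_reflect (F : ℕ) (p : ℕ → Prop) [DecidablePred p] :
    #{x ∈ range (F + 1) | p (F - x)} = #{x ∈ range (F + 1) | p x} := by
  simpa only [card_filter, add_tsub_cancel_right] using
    sum_range_reflect (fun x => if p x then 1 else 0) (F + 1)

theorem two_mul_ncard_compl (hS : IsNumericalSemigroup S) (hF : HasFrobenius S F) :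
    2 * Sᶜ.ncard = F + 1 + #(unpairedGaps S F) := by
  have hpaired :
      {x ∈ range (F + 1) | x ∉ S ∧ F - x ∈ S} = {x ∈ range (F + 1) | F - x ∈ S} :=
    filter_congr fun x hx => and_iff_right_of_imp fun hFx hxS =>
      hF.sub_notMem hS hFx (Nat.sub_le F x)
        (by rwa [Nat.sub_sub_self (by simpa [Nat.lt_succ_iff] using hx)])
  have hgaps :=
    card_filter_add_card_filter_not (s := {x ∈ range (F + 1) | x ∉ S}) (fun x => F - x ∈ S)
  have hall := card_filter_add_card_filter_not (s := range (F + 1)) (· ∈ S)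
  rw [filter_filter, filter_filter, hpaired, card_filter_range_reflect F (· ∈ S)] at hgaps
  rw [hF.compl_eq_filter_range, Set.ncard_coe_finset, unpairedGaps, card_range] at *
  omega

theorem card_unpairedGaps_le_one_iff (hF : HasFrobenius S F) :
    #(unpairedGaps S F) ≤ 1 ↔ IsSymOrPseudoSym S F := by
  simp only [card_le_one, unpairedGaps, mem_filter, mem_range]
  constructor
  · intro h x hxS
    by_contra! hx
    have hxF := hF.le_of_notMem hxS
    have := h x ⟨by omega, hxS, hx.1⟩ (F - x)
      ⟨by omega, hx.1, by rwa [Nat.sub_sub_self hxF]⟩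
    omega
  · intro hA x ⟨_, hxS, hFx⟩ y ⟨_, hyS, hFy⟩
    have := (hA x hxS).resolve_left hFx
    have := (hA y hyS).resolve_left hFy
    omega

theorem ncard_compl_eq_filter_range_iff (hS : IsNumericalSemigroup S) (hF : HasFrobenius S F) :
    Sᶜ.ncard = F / 2 + 1 ↔ IsSymOrPseudoSym S F := by
  rw [← card_unpairedGaps_le_one_iff hF]
  have := two_mul_ncard_compl hS hF
  omega

end Genus

theorem ceil_add_one_div_two (F : ℕ) : ⌈((F : ℚ) + 1) / 2⌉ = (F / 2 + 1 : ℕ) := by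
  rw [Int.ceil_eq_iff]
  obtain ⟨k, rfl | rfl⟩ := Nat.even_or_odd' F <;>
    push_cast [Nat.mul_div_cancel_left, Nat.mul_add_div] <;> constructor <;> linarith

theorem stmt12 (S : Set ℕ) (F : ℕ) (hS : IsNumericalSemigroup S)
    (hF : HasFrobenius S F) :
    IsIrreducibleNS S ↔ (Sᶜ.ncard : ℤ) = ⌈((F : ℚ) + 1) / 2⌉ := by
  rw [isIrreducibleNS_iff hS hF, ← ncard_compl_eq_filter_range_iff hS hF, ceil_add_one_div_two]
  exact_mod_cast Iff.rfl
end

section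
/- Let S be an irreducible numerical semigroup with Frobenius number F, and let x be a minimal generator of S with x < F, 2x - F ∉ S, 3x ≠ 2F and 4x ≠ 3F. Then (S \ {x}) ∪ {F - x} is an irreducible numerical semigroup with Frobenius number F. -/
/-!
A numerical semigroup `S` with Frobenius number `F` is irreducible iff it is symmetric or
pseudo-symmetric: `F - y ∈ S` for every gap `y < F` with `2 * y ≠ F`. If `S` fails this, a
largest offending gap `y` has `2 * y > F` and `y + (S \ {0}) ⊆ S`, so `S = (S ∪ {y}) ∩ (S ∪ {F})`;
conversely every numerical semigroup strictly containing such an `S` contains `F`.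

Let `T = (S \ {x}) ∪ {F - x}`. Through the pairing `y ↦ F - y` of the gaps of `S`, each condition
on `x` secures one closure property of `T`: `F - x + a ∈ S \ {x}` for `0 ≠ a ∈ S \ {x}` because
`2 * x - F ∉ S` and `x` is a minimal generator, and `2 * (F - x) ∈ S \ {x}` because
`4 * x ≠ 3 * F` and `3 * x ≠ 2 * F`. The gaps of `T` are those of `S` with `F - x` replaced by `x`,
so `T` still pairs its gaps around `F`.
-/

lemma HasFrobenius.le_of_notMem_s15 {S : Set ℕ} {F y : ℕ} (hF : HasFrobenius S F) (hy : y ∉ S) :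
    y ≤ F :=
  not_lt.1 fun h => hy (hF.2 y h)

lemma HasFrobenius.lt_of_notMem {S : Set ℕ} {F y : ℕ} (hF : HasFrobenius S F) (hy : y ∉ S)
    (hyF : y ≠ F) : y < F :=
  (hF.le_of_notMem_s15 hy).lt_of_ne hyF

def IsSymmetricOrPseudoSymmetric (S : Set ℕ) (F : ℕ) : Prop :=
  ∀ y < F, y ∉ S → 2 * y ≠ F → F - y ∈ S

namespace IsNumericalSemigroup

variable {S : Set ℕ}

lemma pos_of_notMem (hS : IsNumericalSemigroup S) {y : ℕ} (hy : y ∉ S) : 0 < y :=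
  Nat.pos_of_ne_zero fun h => hy (h ▸ hS.1)

lemma add_mem (hS : IsNumericalSemigroup S) {a b : ℕ} (ha : a ∈ S) (hb : b ∈ S) :
    a + b ∈ S :=
  hS.2.1 a ha b hb

lemma union_singleton (hS : IsNumericalSemigroup S) {y : ℕ}
    (hadd : ∀ s ∈ S, 0 < s → y + s ∈ S) (hyy : y + y ∈ S) :
    IsNumericalSemigroup (S ∪ {y}) := by
  refine ⟨Or.inl hS.1, ?_, hS.2.2.subset fun z hz hzS => hz (Or.inl hzS)⟩
  rintro a (ha | rfl) b (hb | rfl)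
  · exact Or.inl (hS.add_mem ha hb)
  · rcases Nat.eq_zero_or_pos a with rfl | ha0
    · simp
    · exact Or.inl (Nat.add_comm a b ▸ hadd a ha ha0)
  · rcases Nat.eq_zero_or_pos b with rfl | hb0
    · simp
    · exact Or.inl (hadd b hb hb0)
  · exact Or.inl hyy

lemma union_frobenius (hS : IsNumericalSemigroup S) {F : ℕ} (hF : HasFrobenius S F) :
    IsNumericalSemigroup (S ∪ {F}) :=
  have hF0 := hS.pos_of_notMem hF.1
  hS.union_singleton (fun _ _ hs => hF.2 _ (by omega)) (hF.2 _ (by omega))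

end IsNumericalSemigroup

lemma HasFrobenius.mem_of_ssubset_s15 {S : Set ℕ} {F : ℕ} (hF : HasFrobenius S F)
    (hsym : IsSymmetricOrPseudoSymmetric S F) {T : Set ℕ} (hT : IsNumericalSemigroup T)
    (hST : S ⊂ T) : F ∈ T := by
  obtain ⟨y, hyT, hyS⟩ := Set.exists_of_ssubset hST
  obtain rfl | hlt := (hF.le_of_notMem_s15 hyS).eq_or_lt
  · exact hyT
  by_cases h2y : 2 * y = F
  · exact (show y + y = F by omega) ▸ hT.add_mem hyT hyT
  · exact (show y + (F - y) = F by omega) ▸ hT.add_mem hyT (hST.1 (hsym y hlt hyS h2y))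


lemma IsIrreducibleNS.eq_of_union_singleton {S : Set ℕ} (hS : IsIrreducibleNS S) {a b : ℕ}
    (ha : a ∉ S) (hb : b ∉ S) (hSa : IsNumericalSemigroup (S ∪ {a}))
    (hSb : IsNumericalSemigroup (S ∪ {b})) : a = b := by
  by_contra hab
  refine hS.2 ⟨S ∪ {a}, S ∪ {b}, hSa, hSb, ?_, ?_, ?_⟩
  · exact Set.ssubset_iff_of_subset Set.subset_union_left |>.2 ⟨a, by simp, ha⟩
  · exact Set.ssubset_iff_of_subset Set.subset_union_left |>.2 ⟨b, by simp, hb⟩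
  · ext z
    simp only [Set.mem_inter_iff, Set.mem_union, Set.mem_singleton_iff]
    constructor
    · exact fun hz => ⟨Or.inl hz, Or.inl hz⟩
    · rintro ⟨hz | rfl, hz' | rfl⟩ <;> first | assumption | exact absurd rfl hab

theorem IsIrreducibleNS.isSymmetricOrPseudoSymmetric {S : Set ℕ} {F : ℕ}
    (hS : IsIrreducibleNS S) (hF : HasFrobenius S F) : IsSymmetricOrPseudoSymmetric S F := by
  suffices H : ∀ d y, F - y = d → y < F → y ∉ S → 2 * y ≠ F → F - y ∈ S from
    fun y => H _ y rfl
  intro d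
  induction d using Nat.strong_induction_on with
  | _ d ih =>
  rintro y rfl hyF hyS h2y
  by_contra hFy
  have hy0 := hS.1.pos_of_notMem hyS
  obtain hlt | hgt : 2 * y < F ∨ F < 2 * y := by omega
  · have h := ih (F - (F - y)) (by omega) (F - y) rfl (by omega) hFy (by omega)
    exact hyS (Nat.sub_sub_self hyF.le ▸ h)
  · have hadd : ∀ s ∈ S, 0 < s → y + s ∈ S := by
      intro s hs hs0
      by_contra hys
      have hysF : y + s < F :=
        hF.lt_of_notMem hys fun h => hFy ((show F - y = s by omega) ▸ hs)
      have h := ih (F - (y + s)) (by omega) (y + s) rfl hysF hys (by omega)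
      exact hFy ((show F - (y + s) + s = F - y by omega) ▸ hS.1.add_mem h hs)
    have hSy := hS.1.union_singleton hadd (hF.2 _ (by omega))
    exact hyF.ne (hS.eq_of_union_singleton hyS hF.1 hSy (hS.1.union_frobenius hF))

theorem isIrreducibleNS_of_isSymmetricOrPseudoSymmetric {S : Set ℕ} {F : ℕ}
    (hS : IsNumericalSemigroup S) (hF : HasFrobenius S F)
    (hsym : IsSymmetricOrPseudoSymmetric S F) : IsIrreducibleNS S := by
  refine ⟨hS, fun ⟨S₁, S₂, h₁, h₂, hS₁, hS₂, hS₁₂⟩ => hF.1 ?_⟩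
  rw [hS₁₂]
  exact ⟨hF.mem_of_ssubset_s15 hsym h₁ hS₁, hF.mem_of_ssubset_s15 hsym h₂ hS₂⟩

section SwapGenerator

variable {S : Set ℕ} {F x : ℕ}

lemma hasFrobenius_diff_union (hF : HasFrobenius S F) (hx0 : 0 < x) (hxF : x < F) :
    HasFrobenius ((S \ {x}) ∪ {F - x}) F := by
  refine ⟨?_, fun y hy => Or.inl ⟨hF.2 y hy, by simp only [Set.mem_singleton_iff]; omega⟩⟩
  rintro (⟨hFS, -⟩ | hFx)
  · exact hF.1 hFS
  · simp only [Set.mem_singleton_iff] at hFx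
    omega

lemma sub_add_mem_diff (hF : HasFrobenius S F) (hsym : IsSymmetricOrPseudoSymmetric S F)
    (hmin : IsNumericalSemigroup (S \ {x})) (hxF : x < F) (hgap : ∀ a ∈ S, a + F ≠ 2 * x)
    {a : ℕ} (ha : a ∈ S \ {x}) (ha0 : 0 < a) : F - x + a ∈ S \ {x} := by
  obtain ⟨haS, hax⟩ := ha
  simp only [Set.mem_singleton_iff] at hax
  refine ⟨?_, fun h => hgap a haS (by simp only [Set.mem_singleton_iff] at h; omega)⟩
  by_contra hc
  have hcF : F - x + a < F := hF.lt_of_notMem hc fun h => hax (by omega)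
  have hxa := hsym _ hcF hc fun h =>
    hgap (a + a) (hmin.add_mem ⟨haS, hax⟩ ⟨haS, hax⟩).1 (by omega)
  rw [show F - (F - x + a) = x - a by omega] at hxa
  have hxa' : x - a ∈ S \ {x} := ⟨hxa, by simp only [Set.mem_singleton_iff]; omega⟩
  exact (hmin.add_mem hxa' ⟨haS, hax⟩).2 (by simp only [Set.mem_singleton_iff]; omega)

lemma sub_add_sub_mem_diff (hS : IsNumericalSemigroup S) (hF : HasFrobenius S F)
    (hsym : IsSymmetricOrPseudoSymmetric S F) (hxF : x < F) (hgap : ∀ a ∈ S, a + F ≠ 2 * x)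
    (h3 : 3 * x ≠ 2 * F) (h4 : 4 * x ≠ 3 * F) :
    F - x + (F - x) ∈ S \ {x} := by
  have h2x : 2 * x ≠ F := fun h => hgap 0 hS.1 (by omega)
  refine ⟨?_, by simp only [Set.mem_singleton_iff]; omega⟩
  by_contra hc
  have hcF : F - x + (F - x) < F := hF.lt_of_notMem hc fun h => h2x (by omega)
  have h := hsym _ hcF hc (by omega)
  exact hgap _ h (by omega)

lemma isSymmetricOrPseudoSymmetric_diff_union (hsym : IsSymmetricOrPseudoSymmetric S F)
    (hxF : x < F) : IsSymmetricOrPseudoSymmetric ((S \ {x}) ∪ {F - x}) F := by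
  intro y hyF hyT h2y
  by_cases hyx : y = x
  · exact Or.inr (hyx ▸ rfl)
  have hyS : y ∉ S := fun h => hyT (Or.inl ⟨h, hyx⟩)
  have hyFx : y ≠ F - x := fun h => hyT (Or.inr h)
  exact Or.inl ⟨hsym y hyF hyS h2y, by simp only [Set.mem_singleton_iff]; omega⟩

end SwapGenerator

theorem stmt15_general (S : Set ℕ) (F x : ℕ) (hS : IsIrreducibleNS S)
    (hF : HasFrobenius S F)
    (hmin : IsNumericalSemigroup (S \ {x}))
    (h1 : x < F) (h2 : (2 * x : ℤ) - F ∉ (Nat.cast '' S : Set ℤ))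
    (h3 : 3 * x ≠ 2 * F) (h4 : 4 * x ≠ 3 * F) :
    IsIrreducibleNS ((S \ {x}) ∪ {F - x}) ∧
      HasFrobenius ((S \ {x}) ∪ {F - x}) F := by
  have hsym := hS.isSymmetricOrPseudoSymmetric hF
  have hgap : ∀ a ∈ S, a + F ≠ 2 * x := fun a ha h => h2 ⟨a, ha, by omega⟩
  have hx0 : 0 < x := hmin.pos_of_notMem (by simp)
  have hT : IsNumericalSemigroup ((S \ {x}) ∪ {F - x}) :=
    hmin.union_singleton (fun _ ha ha0 => sub_add_mem_diff hF hsym hmin h1 hgap ha ha0)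
      (sub_add_sub_mem_diff hS.1 hF hsym h1 hgap h3 h4)
  have hFT := hasFrobenius_diff_union hF hx0 h1
  exact ⟨isIrreducibleNS_of_isSymmetricOrPseudoSymmetric hT hFT
    (isSymmetricOrPseudoSymmetric_diff_union hsym h1), hFT⟩

theorem stmt15 (S : Set ℕ) (F x : ℕ) (hS : IsIrreducibleNS S)
    (hF : HasFrobenius S F)
    (hx : x ∈ S) (hmin : IsNumericalSemigroup (S \ {x}))
    (h1 : x < F) (h2 : (2 * x : ℤ) - F ∉ (Nat.cast '' S : Set ℤ))
    (h3 : 3 * x ≠ 2 * F) (h4 : 4 * x ≠ 3 * F) :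
    IsIrreducibleNS ((S \ {x}) ∪ {F - x}) ∧
      HasFrobenius ((S \ {x}) ∪ {F - x}) F :=
  stmt15_general S F x hS hF hmin h1 h2 h3 h4
end

section
/- Let F ≥ 3, m ≤ (F+2)/2 and m ∤ F. If S is an irreducible numerical semigroup with multiplicity m and Frobenius number F, and (q₁,...,q_{m-1}) is its Kunz coordinate vector with respect to m, then q₁ + ... + q_{m-1} = ⌈(F+1)/2⌉. -/
/-!
Write `g = #(ℕ \ S)` for the genus. Sorting the gaps of `S` by their residue modulo `m`, the gaps
congruent to `i` are `i, i + m, …, i + (qᵢ - 1) m`, so `q₁ + ⋯ + q_{m-1} = g`. An irreducible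
numerical semigroup is maximal among those with Frobenius number `F`, so for every gap `x` with
`2x ≠ F` the number `F - x` lies in `S` (otherwise adjoining the largest such gap would give a
proper oversemigroup). Hence `x ↦ F - x` matches the elements of `S` below `F` with the gaps other
than `F / 2`, and `g = ⌊(F + 2) / 2⌋ = ⌈(F + 1) / 2⌉`.
-/

variable {S : Set ℕ}

namespace IsNumericalSemigroup

theorem mul_mem (hS : IsNumericalSemigroup S) {m : ℕ} (hm : m ∈ S) (k : ℕ) : k * m ∈ S := by
  induction k with
  | zero => simpa using hS.1
  | succ k ih => simpa [Nat.succ_mul] using hS.2.1 _ ih _ hm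

theorem mem_of_dvd (hS : IsNumericalSemigroup S) {m x : ℕ} (hm : m ∈ S) (hmx : m ∣ x) : x ∈ S := by
  obtain ⟨k, rfl⟩ := hmx
  exact Nat.mul_comm k m ▸ hS.mul_mem hm k

theorem insert_of_add_mem_s18 {h : ℕ} (hS : IsNumericalSemigroup S)
    (hadd : ∀ s ∈ S, 0 < s → h + s ∈ S) (hdouble : h + h ∈ S) :
    IsNumericalSemigroup (insert h S) := by
  refine ⟨Or.inr hS.1, ?_, hS.2.2.subset (Set.compl_subset_compl.2 (Set.subset_insert h S))⟩
  have hadd' : ∀ s ∈ S, h + s ∈ insert h S := fun s hs => by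
    rcases Nat.eq_zero_or_pos s with rfl | hs0
    · exact Or.inl rfl
    · exact Or.inr (hadd s hs hs0)
  rintro a (rfl | ha) b (rfl | hb)
  · exact Or.inr hdouble
  · exact hadd' b hb
  · exact add_comm b a ▸ hadd' a ha
  · exact Or.inr (hS.2.1 a ha b hb)

end IsNumericalSemigroup

section Kunz

variable {m : ℕ} {q : ℕ → ℕ}
  (hq : ∀ i, 1 ≤ i → i < m → (q i * m + i ∈ S ∧ ∀ s ∈ S, s % m = i → q i * m + i ≤ s))
include hq

theorem mem_iff_kunz_le_div (hS : IsNumericalSemigroup S) (hm : m ∈ S) (hm0 : 0 < m) {x : ℕ}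
    (hx : x % m ≠ 0) : x ∈ S ↔ q (x % m) ≤ x / m := by
  obtain ⟨hqS, hqmin⟩ := hq (x % m) (Nat.one_le_iff_ne_zero.2 hx) (Nat.mod_lt x hm0)
  have hdiv := Nat.div_add_mod' x m
  constructor
  · intro hxS
    have := hqmin x hxS rfl
    exact Nat.le_of_mul_le_mul_right (by omega) hm0
  · intro hle
    have hxeq : x = (q (x % m) * m + x % m) + (x / m - q (x % m)) * m := by
      rw [← add_rotate, ← add_mul, Nat.sub_add_cancel hle, hdiv]
    exact hxeq ▸ hS.2.1 _ hqS _ (hS.mul_mem hm _)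

theorem ncard_compl_eq_sum_kunz (hS : IsNumericalSemigroup S) (hm : m ∈ S) (hm0 : 0 < m) :
    Sᶜ.ncard = ∑ i ∈ Finset.Ico 1 m, q i := by
  have hmod : ∀ {x}, x ∉ S → x % m ≠ 0 := fun hx h0 =>
    hx (hS.mem_of_dvd hm (Nat.dvd_of_mod_eq_zero h0))
  have hcard : ((Finset.Ico 1 m).sigma fun i => Finset.range (q i)).card =
      ∑ i ∈ Finset.Ico 1 m, q i := by
    simp [Finset.card_sigma]
  rw [← hcard, ← Set.ncard_coe_finset]
  refine Set.ncard_congr (fun x _ => ⟨x % m, x / m⟩) ?_ ?_ ?_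
  · intro x hx
    have := (mem_iff_kunz_le_div hq hS hm hm0 (hmod hx)).not.1 hx
    simp only [Finset.coe_sigma, Set.mem_sigma_iff, Finset.coe_Ico, Set.mem_Ico, Finset.coe_range,
      Set.mem_Iio]
    exact ⟨⟨Nat.one_le_iff_ne_zero.2 (hmod hx), Nat.mod_lt x hm0⟩, by omega⟩
  · intro a b _ _ hab
    simp only [Sigma.mk.inj_iff, heq_iff_eq] at hab
    rw [← Nat.div_add_mod' a m, ← Nat.div_add_mod' b m, hab.1, hab.2]
  · rintro ⟨i, j⟩ hij
    simp only [Finset.coe_sigma, Set.mem_sigma_iff, Finset.coe_Ico, Set.mem_Ico, Finset.coe_range,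
      Set.mem_Iio] at hij
    obtain ⟨⟨hi1, him⟩, hj⟩ := hij
    have hxmod : (j * m + i) % m = i := by
      rw [Nat.mul_comm, Nat.mul_add_mod, Nat.mod_eq_of_lt him]
    have hxdiv : (j * m + i) / m = j := by
      rw [Nat.mul_comm, Nat.mul_add_div hm0, Nat.div_eq_of_lt him, add_zero]
    refine ⟨j * m + i, ?_, by rw [hxmod, hxdiv]⟩
    rw [Set.mem_compl_iff, mem_iff_kunz_le_div hq hS hm hm0 (by omega), hxmod, hxdiv]
    omega

end Kunz

theorem IsIrreducibleNS.false_of_insert {a b : ℕ} (hS : IsIrreducibleNS S) (ha : a ∉ S)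
    (hb : b ∉ S) (hab : a ≠ b) (hSa : IsNumericalSemigroup (insert a S))
    (hSb : IsNumericalSemigroup (insert b S)) : False := by
  refine hS.2 ⟨_, _, hSa, hSb, Set.ssubset_insert ha, Set.ssubset_insert hb, ?_⟩
  ext x
  simp only [Set.mem_inter_iff, Set.mem_insert_iff]
  constructor
  · exact fun hx => ⟨Or.inr hx, Or.inr hx⟩
  · rintro ⟨rfl | hx, rfl | hx'⟩ <;> first | assumption | exact absurd rfl hab

theorem HasFrobenius.le_of_notMem_s18 {F x : ℕ} (hFS : HasFrobenius S F) (hx : x ∉ S) : x ≤ F :=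
  not_lt.1 fun h => hx (hFS.2 x h)

theorem IsIrreducibleNS.sub_mem_of_notMem {F x : ℕ} (hS : IsIrreducibleNS S)
    (hFS : HasFrobenius S F) (hx : x ∉ S) (hxF : 2 * x ≠ F) : F - x ∈ S := by
  classical
  by_contra hFx
  let P y := y ∉ S ∧ F - y ∉ S ∧ 2 * y ≠ F
  have hPle : ∀ {y}, P y → y ≤ F := fun hy => hFS.le_of_notMem_s18 hy.1
  set h := Nat.findGreatest P F
  obtain ⟨hhS, hFhS, hh2⟩ : P h := Nat.findGreatest_spec (hPle ⟨hx, hFx, hxF⟩) ⟨hx, hFx, hxF⟩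
  have hmax : ∀ {y}, P y → y ≤ h := fun hy => Nat.le_findGreatest (hPle hy) hy
  have hhF : h ≤ F := hFS.le_of_notMem_s18 hhS
  have hFlt : F < 2 * h := by
    have := hmax (y := F - h) ⟨hFhS, by rwa [Nat.sub_sub_self hhF], by omega⟩
    omega
  have hadd : ∀ s ∈ S, 0 < s → h + s ∈ S := by
    intro s hs hs0
    by_contra hhs
    have hhsF := hFS.le_of_notMem_s18 hhs
    by_cases hc : F - (h + s) ∈ S
    · exact hFhS (show F - h = F - (h + s) + s by omega ▸ hS.1.2.1 _ hc _ hs)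
    · have := hmax ⟨hhs, hc, by omega⟩
      omega
  have hF0 : 0 < F := Nat.pos_of_ne_zero fun h0 => hFS.1 (h0 ▸ hS.1.1)
  refine hS.false_of_insert hhS hFS.1 (fun he => hFhS (by simpa [he] using hS.1.1))
    (hS.1.insert_of_add_mem_s18 hadd (hFS.2 _ (by omega)))
    (hS.1.insert_of_add_mem_s18 (fun s _ hs0 => hFS.2 _ (by omega)) (hFS.2 _ (by omega)))

theorem card_eq_card_of_reflection {F : ℕ} {A B : Finset ℕ} (hA : ∀ a ∈ A, a ≤ F)
    (hB : ∀ b ∈ B, b ≤ F) (hAB : ∀ a ∈ A, F - a ∈ B) (hBA : ∀ b ∈ B, F - b ∈ A) :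
    A.card = B.card :=
  Finset.card_nbij' (F - ·) (F - ·) hAB hBA (fun a ha => Nat.sub_sub_self (hA a ha))
    (fun b hb => Nat.sub_sub_self (hB b hb))

theorem IsIrreducibleNS.ncard_compl {F : ℕ} (hS : IsIrreducibleNS S) (hFS : HasFrobenius S F) :
    Sᶜ.ncard = (F + 2) / 2 := by
  classical
  set G := (Finset.range (F + 1)).filter (· ∉ S)
  set T := (Finset.range (F + 1)).filter (· ∈ S)
  have hG : Sᶜ = G := by
    ext x
    simpa [G] using fun hx => Nat.lt_succ_of_le (hFS.le_of_notMem_s18 hx)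
  have hsplit : T.card + G.card = F + 1 := by
    simpa using Finset.card_filter_add_card_filter_not (s := Finset.range (F + 1)) (· ∈ S)
  have hTle : ∀ y ∈ T, y ≤ F := fun y hy =>
    Nat.lt_succ_iff.1 (Finset.mem_range.1 (Finset.mem_filter.1 hy).1)
  have hGle : ∀ y ∈ G, y ≤ F := fun y hy =>
    Nat.lt_succ_iff.1 (Finset.mem_range.1 (Finset.mem_filter.1 hy).1)
  have hTG : ∀ y ∈ T, F - y ∈ G := fun y hy => by
    simp only [T, G, Finset.mem_filter, Finset.mem_range] at hy ⊢
    have hyF : y + (F - y) = F := by omega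
    exact ⟨by omega, fun h => hFS.1 (hyF ▸ hS.1.2.1 y hy.2 _ h)⟩
  have hGT : ∀ y ∈ G, 2 * y ≠ F → F - y ∈ T := fun y hy hyF => by
    simp only [T, G, Finset.mem_filter, Finset.mem_range] at hy ⊢
    exact ⟨by omega, hS.sub_mem_of_notMem hFS hy.2 hyF⟩
  rw [hG, Set.ncard_coe_finset]
  rcases Nat.even_or_odd' F with ⟨t, rfl | rfl⟩
  · have htG : t ∈ G := by
      simp only [G, Finset.mem_filter, Finset.mem_range]
      exact ⟨by omega, fun ht => hFS.1 (two_mul t ▸ hS.1.2.1 t ht t ht)⟩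
    have hTG' : ∀ y ∈ T, 2 * t - y ∈ G.erase t := fun y hy => by
      refine Finset.mem_erase.2 ⟨fun hyt => ?_, hTG y hy⟩
      have hyt : y = t := by
        have := hTle y hy
        omega
      exact (Finset.mem_filter.1 htG).2 (hyt ▸ (Finset.mem_filter.1 hy).2)
    have hGT' : ∀ y ∈ G.erase t, 2 * t - y ∈ T := fun y hy => by
      have := Finset.ne_of_mem_erase hy
      exact hGT y (Finset.mem_of_mem_erase hy) (by omega)
    have := card_eq_card_of_reflection hTle
      (fun y hy => hGle y (Finset.mem_of_mem_erase hy)) hTG' hGT'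
    rw [Finset.card_erase_of_mem htG] at this
    omega
  · have := card_eq_card_of_reflection hTle hGle hTG (fun y hy => hGT y hy (by omega))
    omega

theorem ceil_natCast_add_one_div_two (n : ℕ) : ⌈((n : ℚ) + 1) / 2⌉ = ((n + 2) / 2 : ℕ) := by
  have h : 2 * ((n + 2) / 2) = n + 2 ∨ 2 * ((n + 2) / 2) = n + 1 := by omega
  rw [Int.ceil_eq_iff, Int.cast_natCast]
  obtain h | h := h <;> have h' := congrArg (Nat.cast : ℕ → ℚ) h <;> push_cast at h' <;>
    constructor <;> linarith

theorem stmt18_general (m F : ℕ)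
    (S : Set ℕ) (hS : IsIrreducibleNS S) (hmS : HasMultiplicity S m)
    (hFS : HasFrobenius S F) (q : ℕ → ℕ)
    (hq : ∀ i, 1 ≤ i → i < m →
      (q i * m + i ∈ S ∧ ∀ s ∈ S, s % m = i → q i * m + i ≤ s)) :
    ((∑ i ∈ Finset.Ico 1 m, q i : ℕ) : ℤ) = ⌈((F : ℚ) + 1) / 2⌉ := by
  rw [← ncard_compl_eq_sum_kunz hq hS.1 hmS.1 hmS.2.1, hS.ncard_compl hFS,
    ceil_natCast_add_one_div_two]

theorem stmt18 (m F : ℕ) (hF : 3 ≤ F) (hm : 2 * m ≤ F + 2) (hdvd : ¬ m ∣ F)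
    (S : Set ℕ) (hS : IsIrreducibleNS S) (hmS : HasMultiplicity S m)
    (hFS : HasFrobenius S F) (q : ℕ → ℕ)
    (hq : ∀ i, 1 ≤ i → i < m →
      (q i * m + i ∈ S ∧ ∀ s ∈ S, s % m = i → q i * m + i ≤ s)) :
    ((∑ i ∈ Finset.Ico 1 m, q i : ℕ) : ℤ) = ⌈((F : ℚ) + 1) / 2⌉ :=
  stmt18_general m F S hS hmS hFS q hq
end
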